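/- Let D be a ZX-diagram and w a Pauli labelling of D. Then for every node ν there exist λ ∈ ℂ and α ∈ ℝ with w_ν|ν⟩ = λ|ν_α⟩ (i.e. w is a Pauli semiweb) if and only if w satisfies the H condition and the all-or-nothing condition. -/

import Mathlib

/-- The four Pauli labels. -/
inductive Pauli | I | X | Y | Z
  deriving DecidableEq

instance : Fintype Pauli where
  elems := {Pauli.I, Pauli.X, Pauli.Y, Pauli.Z}
  complete := fun x => by cases x <;> simp

/-- The Pauli matrices as 2×2 complex matrices. -/
def Pauli.mat : Pauli → Matrix (Fin 2) (Fin 2) ℂ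
  | Pauli.I => 1
  | Pauli.X => !![0, 1; 1, 0]
  | Pauli.Y => !![0, -Complex.I; Complex.I, 0]
  | Pauli.Z => !![1, 0; 0, -1]

/-- A wire labelled `p` has X-support if `p ∈ {X, Y}`. -/
def Pauli.hasX : Pauli → Bool
  | Pauli.X => true | Pauli.Y => true | _ => false

/-- A wire labelled `p` has Z-support if `p ∈ {Y, Z}`. -/
def Pauli.hasZ : Pauli → Bool
  | Pauli.Y => true | Pauli.Z => true | _ => false

/-- Node types of a ZX-diagram: Z-spider, X-spider, or H-gate. -/
inductive NodeType | Z | X | H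
  deriving DecidableEq

/-- A ZX-diagram: nodes, wires, adjacency (each wire meets at most two nodes),
types, phases, and input/output wires.  Nodes of type `H` have exactly two wires. -/
structure ZXDiagram (Node Wire : Type) [Fintype Node] [DecidableEq Node]
    [Fintype Wire] [DecidableEq Wire] where
  adj : Node → Wire → Bool
  typ : Node → NodeType
  phase : Node → ℝ
  inputs : Finset Wire
  outputs : Finset Wire
  wire_max_two : ∀ w : Wire, (Finset.univ.filter fun n => adj n w = true).card ≤ 2
  h_deg_two : ∀ n : Node, typ n = NodeType.H →
    (Finset.univ.filter fun w => adj n w = true).card = 2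

variable {Node Wire : Type} [Fintype Node] [DecidableEq Node] [Fintype Wire] [DecidableEq Wire]

/-- Spiders are the nodes of type Z or X. -/
def ZXDiagram.IsSpiderNode (D : ZXDiagram Node Wire) (ν : Node) : Prop :=
  D.typ ν ≠ NodeType.H

/-- Support of the same type as a spider: Z-support for Z-spiders, X-support for X-spiders. -/
def sameSupp : NodeType → Pauli → Bool
  | NodeType.Z, p => p.hasZ
  | NodeType.X, p => p.hasX
  | NodeType.H, _ => false

/-- Support of the opposite type: X-support for Z-spiders, Z-support for X-spiders. -/
def oppSupp : NodeType → Pauli → Bool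
  | NodeType.Z, p => p.hasX
  | NodeType.X, p => p.hasZ
  | NodeType.H, _ => false

/-- The H condition for a Pauli labelling. -/
def HCond (D : ZXDiagram Node Wire) (w : Wire → Pauli) : Prop :=
  ∀ ν j₁ j₂, D.typ ν = NodeType.H → D.adj ν j₁ = true → D.adj ν j₂ = true → j₁ ≠ j₂ →
    (((w j₁).hasX = true) ↔ ((w j₂).hasZ = true)) ∧
    (((w j₁).hasZ = true) ↔ ((w j₂).hasX = true))

/-- The all-or-nothing condition for a Pauli labelling. -/
def AllOrNothing (D : ZXDiagram Node Wire) (w : Wire → Pauli) : Prop :=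
  ∀ ν, D.IsSpiderNode ν →
    (∀ j, D.adj ν j = true → oppSupp (D.typ ν) (w j) = true) ∨
    (∀ j, D.adj ν j = true → oppSupp (D.typ ν) (w j) = false)

/-- A Pauli semiweb is a Pauli labelling satisfying the H and all-or-nothing conditions. -/
def IsSemiweb (D : ZXDiagram Node Wire) (w : Wire → Pauli) : Prop :=
  HCond D w ∧ AllOrNothing D w

/-- The number of wires adjacent to `ν` with support of the same type as `ν`. -/
def sameCount (D : ZXDiagram Node Wire) (w : Wire → Pauli) (ν : Node) : ℕ :=
  (Finset.univ.filter fun j => D.adj ν j = true ∧ sameSupp (D.typ ν) (w j) = true).card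

/-- Some wire adjacent to `ν` has support of the opposite type. -/
def HasOpp (D : ZXDiagram Node Wire) (w : Wire → Pauli) (ν : Node) : Prop :=
  ∃ j, D.adj ν j = true ∧ oppSupp (D.typ ν) (w j) = true

/-- `x` is an odd integer multiple of `π/2`. -/
def IsOddMulHalfPi (x : ℝ) : Prop := ∃ k : ℤ, x = (2 * k + 1) * (Real.pi / 2)

/-- `x` is an integer multiple of `π/2`. -/
def IsMulHalfPi (x : ℝ) : Prop := ∃ k : ℤ, x = k * (Real.pi / 2)

/-- The parity condition at a spider `ν`. -/
def ParityAt (D : ZXDiagram Node Wire) (w : Wire → Pauli) (ν : Node) : Prop :=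
  (¬ IsOddMulHalfPi (D.phase ν) → Even (sameCount D w ν)) ∧
  (IsOddMulHalfPi (D.phase ν) → (Even (sameCount D w ν) ↔ ¬ HasOpp D w ν))

/-- The Kronecker product `P₁ ⊗ ⋯ ⊗ P_k` of Pauli matrices, realized as a matrix acting on
the function space `(ι → Fin 2) → ℂ`, acting by `p j` on the `j`-th factor. -/
def pauliOp {ι : Type*} [Fintype ι] (p : ι → Pauli) :
    Matrix (ι → Fin 2) (ι → Fin 2) ℂ :=
  Matrix.of fun f g => ∏ j, (p j).mat (f j) (g j)

/-- The twisted local state `|ν_α⟩` of a node `ν`, living in the tensor power of `ℂ²` indexed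
by the wires adjacent to `ν` (realized as a function space).  Taking `α = 0` gives the local
state `|ν⟩`. -/
noncomputable def localState {Node Wire : Type} [Fintype Node] [DecidableEq Node]
    [Fintype Wire] [DecidableEq Wire] (D : ZXDiagram Node Wire) (ν : Node) (α : ℝ) :
    ({j : Wire // D.adj ν j = true} → Fin 2) → ℂ :=
  match D.typ ν with
  | NodeType.Z => fun f =>
      (if ∀ j, f j = 0 then (1 : ℂ) else 0) +
        Complex.exp ((D.phase ν + α) * Complex.I) * (if ∀ j, f j = 1 then 1 else 0)
  | NodeType.X => fun f =>
      1 + Complex.exp ((D.phase ν + α) * Complex.I) *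
        (-1 : ℂ) ^ (Finset.univ.filter fun j => f j = 1).card
  | NodeType.H => fun f => if ∀ j, f j = 1 then (-1 : ℂ) else 1

/-- `w` is a Pauli semiweb (semantic definition): at every node, acting with the Paulis on
the adjacent wires sends the local state `|ν⟩` to a multiple of some twisted local
state `|ν_α⟩`. -/
def IsPauliSemiwebState {Node Wire : Type} [Fintype Node] [DecidableEq Node]
    [Fintype Wire] [DecidableEq Wire] (D : ZXDiagram Node Wire) (w : Wire → Pauli) : Prop :=
  ∀ ν : Node, ∃ (lam : ℂ) (α : ℝ),
    (pauliOp fun j : {j : Wire // D.adj ν j = true} => w j.1).mulVec (localState D ν 0) =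
      lam • localState D ν α

def xbit : Pauli → Fin 2
  | Pauli.X => 1 | Pauli.Y => 1 | _ => 0

def ent : Pauli → Fin 2 → ℂ
  | Pauli.I, _ => 1
  | Pauli.X, _ => 1
  | Pauli.Y, b => if b = 0 then Complex.I else -Complex.I
  | Pauli.Z, b => if b = 0 then 1 else -1

lemma ent_ne_zero (P : Pauli) (b : Fin 2) : ent P b ≠ 0 := by
  rcases P <;> fin_cases b <;> simp [ent, Complex.I_ne_zero]

lemma abs_ent (P : Pauli) (b : Fin 2) : ‖ent P b‖ = 1 := by
  rcases P <;> fin_cases b <;> simp [ent]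

lemma mat_apply (P : Pauli) (a b : Fin 2) :
    P.mat a b = if a = b + xbit P then ent P b else 0 := by
  rcases P <;> fin_cases a <;> fin_cases b <;>
    simp [Pauli.mat, ent, xbit, Matrix.one_apply]

def sgn : Fin 2 → ℂ := fun b => if b = 1 then -1 else 1

lemma sgn_add (a b : Fin 2) : sgn (a + b) = sgn a * sgn b := by
  fin_cases a <;> fin_cases b <;> simp [sgn, Fin.ext_iff]

lemma sgn_ne_zero (b : Fin 2) : sgn b ≠ 0 := by fin_cases b <;> norm_num [sgn]

lemma abs_sgn (b : Fin 2) : ‖sgn b‖ = 1 := by fin_cases b <;> simp [sgn]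

lemma fin2_add_add (a x : Fin 2) : a + x + x = a := by fin_cases a <;> fin_cases x <;> rfl

lemma prod_sgn_eq {ι : Type*} [Fintype ι] (f : ι → Fin 2) :
    ∏ j, sgn (f j) = (-1 : ℂ) ^ (Finset.univ.filter fun j => f j = 1).card := by
  classical
  unfold sgn
  rw [Finset.prod_ite, Finset.prod_const, Finset.prod_const, one_pow, mul_one]

lemma fin2_eq_add_iff (a b x : Fin 2) : a = b + x ↔ b = a + x := by
  fin_cases a <;> fin_cases b <;> fin_cases x <;> simp <;> decide

lemma pauliOp_mulVec {ι : Type*} [Fintype ι] [DecidableEq ι] (p : ι → Pauli)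
    (v : (ι → Fin 2) → ℂ) (f : ι → Fin 2) :
    (pauliOp p).mulVec v f
      = (∏ j, ent (p j) (f j + xbit (p j))) * v (fun j => f j + xbit (p j)) := by
  classical
  unfold pauliOp Matrix.mulVec dotProduct
  rw [Finset.sum_eq_single (fun j => f j + xbit (p j))]
  · congr 1
    apply Finset.prod_congr rfl
    intro j _
    rw [mat_apply]
    simp [fin2_add_add]
  · intro g _ hg
    have : ∃ j, g j ≠ f j + xbit (p j) := by
      by_contra hc
      push_neg at hc
      exact hg (funext hc)
    obtain ⟨j, hj⟩ := this
    apply mul_eq_zero_of_left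
    apply Finset.prod_eq_zero (Finset.mem_univ j)
    rw [mat_apply]
    rw [if_neg]
    rw [fin2_eq_add_iff]
    exact hj
  · simp

lemma fin2_self_add (a : Fin 2) : a + a = 0 := by fin_cases a <;> rfl

lemma fin2_add_one_eq_zero : ∀ a : Fin 2, a + 1 = 0 ↔ a = 1 := by decide
lemma fin2_add_one_eq_one : ∀ a : Fin 2, a + 1 = 1 ↔ a = 0 := by decide

lemma xbit_eq_one {P : Pauli} : xbit P = 1 ↔ P.hasX = true := by
  rcases P <;> simp [xbit, Pauli.hasX]

lemma xbit_eq_zero {P : Pauli} : xbit P = 0 ↔ P.hasX = false := by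
  rcases P <;> simp [xbit, Pauli.hasX]

lemma exists_alpha (φ : ℝ) (z : ℂ) (hz : ‖z‖ = 1) :
    ∃ α : ℝ, Complex.exp ((φ + α : ℝ) * Complex.I) = z := by
  refine ⟨z.arg - φ, ?_⟩
  rw [show φ + (z.arg - φ) = z.arg by ring]
  have := Complex.norm_mul_exp_arg_mul_I z
  rw [hz] at this
  simpa using this

noncomputable def zVec {ι : Type*} [Fintype ι] (φ : ℝ) : (ι → Fin 2) → ℂ := fun f =>
  (if ∀ j, f j = 0 then (1 : ℂ) else 0) +
    Complex.exp ((φ : ℝ) * Complex.I) * (if ∀ j, f j = 1 then 1 else 0)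

lemma zIff {ι : Type*} [Fintype ι] [DecidableEq ι] (p : ι → Pauli) (φ : ℝ) :
    (∃ (lam : ℂ) (α : ℝ), (pauliOp p).mulVec (zVec φ) = lam • zVec (φ + α)) ↔
      ((∀ j, (p j).hasX = true) ∨ (∀ j, (p j).hasX = false)) := by
  classical
  have habsexp : ‖Complex.exp ((φ : ℝ) * Complex.I)‖ = 1 :=
    Complex.norm_exp_ofReal_mul_I φ
  have hexpne : Complex.exp ((φ : ℝ) * Complex.I) ≠ 0 := Complex.exp_ne_zero _
  set c0 := ∏ j, ent (p j) 0 with hc0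
  set c1 := ∏ j, ent (p j) 1 with hc1
  have hc0n : c0 ≠ 0 := Finset.prod_ne_zero_iff.mpr fun j _ => ent_ne_zero _ _
  have hc1n : c1 ≠ 0 := Finset.prod_ne_zero_iff.mpr fun j _ => ent_ne_zero _ _
  have habs0 : ‖c0‖ = 1 := by
    rw [hc0, norm_prod]; exact Finset.prod_eq_one fun j _ => abs_ent _ _
  have habs1 : ‖c1‖ = 1 := by
    rw [hc1, norm_prod]; exact Finset.prod_eq_one fun j _ => abs_ent _ _
  rcases isEmpty_or_nonempty ι with hι | hι
  · constructor
    · intro _; right; intro j; exact (hι.false j).elim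
    · intro _
      refine ⟨1, 0, ?_⟩
      funext f
      rw [pauliOp_mulVec, Subsingleton.elim (fun j => f j + xbit (p j)) f]
      have : ∏ j, ent (p j) (f j + xbit (p j)) = 1 := by
        rw [Finset.univ_eq_empty, Finset.prod_empty]
      rw [this, one_mul, add_zero, Pi.smul_apply, one_smul]
  · obtain ⟨j₀⟩ := hι
    constructor
    · rintro ⟨lam, α, hE⟩
      by_contra hmix
      push_neg at hmix
      obtain ⟨hnX, hnO⟩ := hmix
      obtain ⟨j₁, hj₁⟩ := hnO
      obtain ⟨j₂, hj₂⟩ := hnX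
      have hj₁' : (p j₁).hasX = true := by
        cases hhx : (p j₁).hasX with
        | false => exact absurd hhx hj₁
        | true => rfl
      have hj₂' : (p j₂).hasX = false := by
        cases hhx : (p j₂).hasX with
        | false => rfl
        | true => exact absurd hhx hj₂
      have h := congrFun hE (fun j => xbit (p j))
      rw [pauliOp_mulVec] at h
      simp only [fin2_self_add] at h
      have e1 : zVec (ι := ι) φ (fun _ => (0 : Fin 2)) = 1 := by
        rw [zVec, if_pos (fun j => rfl), if_neg]
        · ring
        · intro hc; exact absurd (hc j₀) (by decide)
      rw [e1, mul_one] at h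
      have e2 : zVec (ι := ι) (φ + α) (fun j => xbit (p j)) = 0 := by
        rw [zVec, if_neg, if_neg]
        · ring
        · intro hc
          have := hc j₂
          rw [xbit_eq_zero.mpr hj₂'] at this
          exact absurd this (by decide)
        · intro hc
          have := hc j₁
          rw [xbit_eq_one.mpr hj₁'] at this
          exact absurd this (by decide)
      rw [Pi.smul_apply, e2, smul_zero] at h
      exact hc0n h
    · intro hall
      rcases hall with hX | hO
      · -- all wires have X support: xbit = 1
        have hx : ∀ j, xbit (p j) = 1 := fun j => xbit_eq_one.mpr (hX j)
        have hzabs : ‖c0 / (Complex.exp ((φ : ℝ) * Complex.I) * c1)‖ = 1 := by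
          rw [norm_div, norm_mul, habs0, habsexp, habs1]; norm_num
        obtain ⟨α, hα⟩ := exists_alpha φ _ hzabs
        refine ⟨Complex.exp ((φ : ℝ) * Complex.I) * c1, α, ?_⟩
        funext f
        rw [pauliOp_mulVec, Pi.smul_apply, smul_eq_mul]
        simp only [hx]
        by_cases h1 : ∀ j, f j = 1
        · have hsh : ∀ j, f j + (1 : Fin 2) = 0 := fun j => by
            rw [h1 j]; rfl
          have hprod : ∏ j, ent (p j) (f j + 1) = c0 := by
            rw [hc0]; exact Finset.prod_congr rfl fun j _ => by rw [hsh j]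
          have hv : zVec (ι := ι) φ (fun j => f j + 1) = 1 := by
            rw [zVec, if_pos hsh, if_neg]
            · ring
            · intro hc
              have := hc j₀; rw [hsh j₀] at this; exact absurd this (by decide)
          have hv2 : zVec (φ + α) f =
              Complex.exp ((φ + α : ℝ) * Complex.I) := by
            rw [zVec, if_pos h1, if_neg]
            · ring
            · intro hc
              have h0 := hc j₀; rw [h1 j₀] at h0; exact absurd h0 (by decide)
          rw [hprod, hv, hv2, hα]
          field_simp
        · by_cases h0 : ∀ j, f j = 0
          · have hsh : ∀ j, f j + (1 : Fin 2) = 1 := fun j => by rw [h0 j]; rfl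
            have hprod : ∏ j, ent (p j) (f j + 1) = c1 := by
              rw [hc1]; exact Finset.prod_congr rfl fun j _ => by rw [hsh j]
            have hv : zVec (ι := ι) φ (fun j => f j + 1) =
                Complex.exp ((φ : ℝ) * Complex.I) := by
              rw [zVec, if_pos hsh, if_neg]
              · ring
              · intro hc
                have := hc j₀; rw [hsh j₀] at this; exact absurd this (by decide)
            have hv2 : zVec (φ + α) f = 1 := by
              rw [zVec, if_pos h0, if_neg]
              · ring
              · intro hc
                have := hc j₀; rw [h0 j₀] at this; exact absurd this (by decide)
            rw [hprod, hv, hv2]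
            ring
          · have hv : zVec (ι := ι) φ (fun j => f j + 1) = 0 := by
              rw [zVec, if_neg, if_neg]
              · ring
              · intro hc
                exact h0 fun j => by
                  have := hc j
                  rwa [fin2_add_one_eq_one] at this
              · intro hc
                exact h1 fun j => by
                  have := hc j
                  rwa [fin2_add_one_eq_zero] at this
            have hv2 : zVec (φ + α) f = 0 := by
              rw [zVec, if_neg h0, if_neg h1]; ring
            rw [hv, hv2]; ring
      · -- no wire has X support: xbit = 0
        have hx : ∀ j, xbit (p j) = 0 := fun j => xbit_eq_zero.mpr (hO j)
        have hzabs : ‖Complex.exp ((φ : ℝ) * Complex.I) * c1 / c0‖ = 1 := by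
          rw [norm_div, norm_mul, habs0, habsexp, habs1]; norm_num
        obtain ⟨α, hα⟩ := exists_alpha φ _ hzabs
        refine ⟨c0, α, ?_⟩
        funext f
        rw [pauliOp_mulVec, Pi.smul_apply, smul_eq_mul]
        simp only [hx, add_zero]
        by_cases h0 : ∀ j, f j = 0
        · have hprod : ∏ j, ent (p j) (f j) = c0 := by
            rw [hc0]; exact Finset.prod_congr rfl fun j _ => by rw [h0 j]
          have hne1 : ¬ ∀ j, f j = 1 := fun hc => by
            have := hc j₀; rw [h0 j₀] at this; exact absurd this (by decide)
          have hv : zVec φ f = 1 := by rw [zVec, if_pos h0, if_neg hne1]; ring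
          have hv2 : zVec (φ + α) f = 1 := by rw [zVec, if_pos h0, if_neg hne1]; ring
          rw [hprod, hv, hv2]
        · by_cases h1 : ∀ j, f j = 1
          · have hprod : ∏ j, ent (p j) (f j) = c1 := by
              rw [hc1]; exact Finset.prod_congr rfl fun j _ => by rw [h1 j]
            have hv : zVec φ f = Complex.exp ((φ : ℝ) * Complex.I) := by
              rw [zVec, if_pos h1, if_neg h0]; ring
            have hv2 : zVec (φ + α) f = Complex.exp ((φ + α : ℝ) * Complex.I) := by
              rw [zVec, if_pos h1, if_neg h0]; ring
            rw [hprod, hv, hv2, hα]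
            field_simp
          · have hv : zVec φ f = 0 := by rw [zVec, if_neg h0, if_neg h1]; ring
            have hv2 : zVec (φ + α) f = 0 := by rw [zVec, if_neg h0, if_neg h1]; ring
            rw [hv, hv2]; ring

lemma ent_shift (P : Pauli) (a : Fin 2) :
    ent P (a + xbit P) =
      (if P = Pauli.Y then Complex.I else 1) *
        (if P.hasZ then sgn a * sgn (xbit P) else 1) := by
  rcases P <;> fin_cases a <;>
    simp [ent, xbit, sgn, Pauli.hasZ] <;> norm_num [Fin.ext_iff]

lemma sgn_sq (b : Fin 2) : sgn b * sgn b = 1 := by fin_cases b <;> norm_num [sgn]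

noncomputable def xVec {ι : Type*} [Fintype ι] (φ : ℝ) : (ι → Fin 2) → ℂ := fun f =>
  1 + Complex.exp ((φ : ℝ) * Complex.I) *
    (-1 : ℂ) ^ (Finset.univ.filter fun j => f j = 1).card

lemma xVec_eq {ι : Type*} [Fintype ι] (φ : ℝ) (f : ι → Fin 2) :
    xVec φ f = 1 + Complex.exp ((φ : ℝ) * Complex.I) * ∏ j, sgn (f j) := by
  rw [xVec, prod_sgn_eq]

lemma xIff {ι : Type*} [Fintype ι] [DecidableEq ι] (p : ι → Pauli) (φ : ℝ) :
    (∃ (lam : ℂ) (α : ℝ), (pauliOp p).mulVec (xVec φ) = lam • xVec (φ + α)) ↔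
      ((∀ j, (p j).hasZ = true) ∨ (∀ j, (p j).hasZ = false)) := by
  classical
  set e := Complex.exp ((φ : ℝ) * Complex.I) with he
  have habsexp : ‖e‖ = 1 := Complex.norm_exp_ofReal_mul_I φ
  have hexpne : e ≠ 0 := Complex.exp_ne_zero _
  set K := ∏ j, (if p j = Pauli.Y then Complex.I else 1) with hK
  set Z0 := ∏ j, (if (p j).hasZ then sgn (xbit (p j)) else 1) with hZ0
  set sX := ∏ j, sgn (xbit (p j)) with hsX
  have hKn : K ≠ 0 := Finset.prod_ne_zero_iff.mpr fun j _ => by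
    split <;> simp [Complex.I_ne_zero]
  have hZ0n : Z0 ≠ 0 := Finset.prod_ne_zero_iff.mpr fun j _ => by
    split <;> [exact sgn_ne_zero _; exact one_ne_zero]
  have habsK : ‖K‖ = 1 := by
    rw [hK, norm_prod]
    exact Finset.prod_eq_one fun j _ => by split <;> simp
  have habssX : ‖sX‖ = 1 := by
    rw [hsX, norm_prod]
    exact Finset.prod_eq_one fun j _ => abs_sgn _
  have hsXn : sX ≠ 0 := Finset.prod_ne_zero_iff.mpr fun j _ => sgn_ne_zero _
  -- general form of the LHS
  have key : ∀ f : ι → Fin 2, (pauliOp p).mulVec (xVec φ) f =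
      K * Z0 * (∏ j, (if (p j).hasZ then sgn (f j) else 1)) *
        (1 + e * (sX * ∏ j, sgn (f j))) := by
    intro f
    rw [pauliOp_mulVec, xVec_eq]
    have h1 : ∏ j, ent (p j) (f j + xbit (p j)) =
        K * Z0 * ∏ j, (if (p j).hasZ then sgn (f j) else 1) := by
      rw [hK, hZ0, ← Finset.prod_mul_distrib, ← Finset.prod_mul_distrib]
      refine Finset.prod_congr rfl fun j _ => ?_
      rw [ent_shift]
      by_cases hz : (p j).hasZ <;> simp [hz] <;> ring
    have h2 : ∏ j, sgn (f j + xbit (p j)) = sX * ∏ j, sgn (f j) := by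
      rw [hsX, ← Finset.prod_mul_distrib]
      refine Finset.prod_congr rfl fun j _ => ?_
      rw [sgn_add]; ring
    rw [h1, h2]
  have msq : ∀ f : ι → Fin 2, (∏ j, sgn (f j)) * ∏ j, sgn (f j) = 1 := by
    intro f
    rw [← Finset.prod_mul_distrib]
    exact Finset.prod_eq_one fun j _ => sgn_sq _
  constructor
  · rintro ⟨lam, α, hE⟩
    by_contra hmix
    push_neg at hmix
    obtain ⟨hnZ, hnO⟩ := hmix
    obtain ⟨j₀, hj₀⟩ := hnO
    obtain ⟨j₁, hj₁⟩ := hnZ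
    have hj₀' : (p j₀).hasZ = true := by
      cases hhx : (p j₀).hasZ with
      | false => exact absurd hhx hj₀
      | true => rfl
    have hj₁' : (p j₁).hasZ = false := by
      cases hhx : (p j₁).hasZ with
      | false => rfl
      | true => exact absurd hhx hj₁
    have hne : j₀ ≠ j₁ := fun hc => by rw [hc, hj₁'] at hj₀'; exact Bool.noConfusion hj₀'
    set e' := Complex.exp ((φ + α : ℝ) * Complex.I) with he'
    have hRHS : ∀ f : ι → Fin 2, (lam • xVec (ι := ι) (φ + α)) f =
        lam * (1 + e' * ∏ j, sgn (f j)) := by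
      intro f
      rw [Pi.smul_apply, smul_eq_mul, xVec_eq]
    -- four evaluation points
    set fa : ι → Fin 2 := fun j => if j = j₀ then 1 else 0 with hfa
    set fb : ι → Fin 2 := fun j => if j = j₁ then 1 else 0 with hfb
    have hma : ∏ j, sgn (fa j) = -1 := by
      rw [Finset.prod_eq_single j₀ (fun j _ hj => by simp [hfa, hj, sgn])
        (fun h => absurd (Finset.mem_univ j₀) h)]
      simp [hfa, sgn]
    have hmb : ∏ j, sgn (fb j) = -1 := by
      rw [Finset.prod_eq_single j₁ (fun j _ hj => by simp [hfb, hj, sgn])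
        (fun h => absurd (Finset.mem_univ j₁) h)]
      simp [hfb, sgn]
    have hHa : ∏ j, (if (p j).hasZ then sgn (fa j) else 1) = -1 := by
      rw [Finset.prod_eq_single j₀
        (fun j _ hj => by by_cases hz : (p j).hasZ <;> simp [hfa, hj, sgn, hz])
        (fun h => absurd (Finset.mem_univ j₀) h)]
      simp [hfa, hj₀', sgn]
    have hHb : ∏ j, (if (p j).hasZ then sgn (fb j) else 1) = 1 := by
      refine Finset.prod_eq_one fun j _ => ?_
      by_cases hj : j = j₁
      · rw [hj, hj₁']; simp
      · by_cases hz : (p j).hasZ <;> simp [hfb, hj, sgn, hz]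
    have hm0 : ∏ j, sgn ((fun _ => (0 : Fin 2)) (j : ι)) = 1 :=
      Finset.prod_eq_one fun j _ => by simp [sgn]
    have hH0 : ∏ j : ι, (if (p j).hasZ then sgn ((fun _ => (0 : Fin 2)) j) else 1) = 1 :=
      Finset.prod_eq_one fun j _ => by by_cases hz : (p j).hasZ <;> simp [sgn, hz]
    set fab : ι → Fin 2 := fun j => fa j + fb j with hfab
    have hmab : ∏ j, sgn (fab j) = 1 := by
      have : ∀ j, sgn (fab j) = sgn (fa j) * sgn (fb j) := fun j => sgn_add _ _
      rw [Finset.prod_congr rfl fun j _ => this j, Finset.prod_mul_distrib, hma, hmb]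
      ring
    have hHab : ∏ j, (if (p j).hasZ then sgn (fab j) else 1) = -1 := by
      have : ∀ j, (if (p j).hasZ then sgn (fab j) else 1) =
          (if (p j).hasZ then sgn (fa j) else 1) * (if (p j).hasZ then sgn (fb j) else 1) := by
        intro j
        by_cases hz : (p j).hasZ <;> simp [hz] <;> exact sgn_add _ _
      rw [Finset.prod_congr rfl fun j _ => this j, Finset.prod_mul_distrib, hHa, hHb]
      ring
    have h1 := congrFun hE (fun _ => (0 : Fin 2))
    have h2 := congrFun hE fa
    have h3 := congrFun hE fb
    have h4 := congrFun hE fab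
    rw [key, hm0, hH0, hRHS, hm0] at h1
    rw [key, hma, hHa, hRHS, hma] at h2
    rw [key, hmb, hHb, hRHS, hmb] at h3
    rw [key, hmab, hHab, hRHS, hmab] at h4
    have hzero : (4 : ℂ) * (K * Z0) = 0 := by linear_combination h1 + h3 - h2 - h4
    have : K * Z0 ≠ 0 := mul_ne_zero hKn hZ0n
    simpa [this] using hzero
  · intro hall
    rcases hall with hZ | hO
    · -- all wires have Z support
      have hzabs : ‖(e * sX)⁻¹‖ = 1 := by
        rw [norm_inv, norm_mul, habsexp, habssX]; norm_num
      obtain ⟨α, hα⟩ := exists_alpha φ _ hzabs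
      refine ⟨K * Z0 * (e * sX), α, ?_⟩
      funext f
      rw [key, Pi.smul_apply, smul_eq_mul, xVec_eq, hα]
      have hH : ∏ j, (if (p j).hasZ then sgn (f j) else 1) = ∏ j, sgn (f j) :=
        Finset.prod_congr rfl fun j _ => by rw [hZ j]; simp
      rw [hH]
      have hm := msq f
      have hsne : (e * sX) ≠ 0 := mul_ne_zero hexpne hsXn
      field_simp
      linear_combination (e * sX) * hm
    · -- no wire has Z support
      have hzabs : ‖e * sX‖ = 1 := by
        rw [norm_mul, habsexp, habssX]; norm_num
      obtain ⟨α, hα⟩ := exists_alpha φ _ hzabs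
      refine ⟨K * Z0, α, ?_⟩
      funext f
      rw [key, Pi.smul_apply, smul_eq_mul, xVec_eq, hα]
      have hH : ∏ j, (if (p j).hasZ then sgn (f j) else 1) = 1 :=
        Finset.prod_eq_one fun j _ => by rw [hO j]; simp
      rw [hH]
      ring


def vV (a b : Fin 2) : ℂ := if a = 1 ∧ b = 1 then -1 else 1

lemma f00 : (0 : Fin 2) + 0 = 0 := rfl
lemma f01 : (0 : Fin 2) + 1 = 1 := rfl
lemma f10 : (1 : Fin 2) + 0 = 1 := rfl
lemma f11 : (1 : Fin 2) + 1 = 0 := rfl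

lemma hPair (P₁ P₂ : Pauli) :
    (∃ lam : ℂ, ∀ a b : Fin 2,
        ent P₁ (a + xbit P₁) * ent P₂ (b + xbit P₂) *
          vV (a + xbit P₁) (b + xbit P₂) = lam * vV a b) ↔
      (P₁.hasX = P₂.hasZ ∧ P₁.hasZ = P₂.hasX) := by
  constructor
  · rintro ⟨lam, h⟩
    have h00 := h 0 0
    have h10 := h 1 0
    have h01 := h 0 1
    have h11 := h 1 1
    clear h
    rcases P₁ <;> rcases P₂ <;>
      simp only [ent, xbit, vV, Pauli.hasX, Pauli.hasZ, f00, f01, f10, f11]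
        at h00 h10 h01 h11 ⊢ <;>
      norm_num at h00 h10 h01 h11 ⊢ <;>
      simp_all [Complex.ext_iff] <;> linarith
  · rintro ⟨hx, hz⟩
    refine ⟨1, ?_⟩
    simp only [Fin.forall_fin_two]
    rcases hP₁ : P₁ <;> rcases hP₂ : P₂ <;> subst hP₁ hP₂ <;>
      simp_all [Pauli.hasX, Pauli.hasZ] <;>
      norm_num [ent, xbit, vV, f00, f01, f10, f11]

def hVec {ι : Type*} [Fintype ι] [DecidableEq ι] : (ι → Fin 2) → ℂ := fun f =>
  if ∀ j, f j = 1 then (-1 : ℂ) else 1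

lemma hIff {ι : Type*} [Fintype ι] [DecidableEq ι] (p : ι → Pauli) (j₁ j₂ : ι)
    (hne : j₁ ≠ j₂) (huniv : (Finset.univ : Finset ι) = {j₁, j₂}) :
    (∃ lam : ℂ, (pauliOp p).mulVec hVec = lam • hVec) ↔
      ((p j₁).hasX = (p j₂).hasZ ∧ (p j₁).hasZ = (p j₂).hasX) := by
  classical
  have hall : ∀ f : ι → Fin 2, (∀ j, f j = 1) ↔ (f j₁ = 1 ∧ f j₂ = 1) := by
    intro f
    constructor
    · intro h; exact ⟨h j₁, h j₂⟩
    · rintro ⟨h1, h2⟩ j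
      have hj : j ∈ (Finset.univ : Finset ι) := Finset.mem_univ j
      rw [huniv, Finset.mem_insert, Finset.mem_singleton] at hj
      rcases hj with rfl | rfl
      · exact h1
      · exact h2
  have hvec_eq : ∀ f : ι → Fin 2, hVec f = vV (f j₁) (f j₂) := by
    intro f
    rw [hVec, vV]
    simp only [hall f]
  have hprod : ∀ F : ι → ℂ, ∏ j, F j = F j₁ * F j₂ := by
    intro F
    rw [huniv, Finset.prod_pair hne]
  rw [← hPair]
  constructor
  · rintro ⟨lam, hE⟩
    refine ⟨lam, fun a b => ?_⟩
    have h := congrFun hE (fun j => if j = j₁ then a else b)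
    rw [pauliOp_mulVec, Pi.smul_apply, smul_eq_mul, hvec_eq, hvec_eq, hprod] at h
    simp only [if_pos rfl, if_neg (Ne.symm hne)] at h
    exact h
  · rintro ⟨lam, h⟩
    refine ⟨lam, ?_⟩
    funext f
    rw [pauliOp_mulVec, Pi.smul_apply, smul_eq_mul, hvec_eq, hvec_eq, hprod]
    exact h (f j₁) (f j₂)

lemma localState_Z' (D : ZXDiagram Node Wire) (ν : Node) (h : D.typ ν = NodeType.Z) (α : ℝ) :
    localState D ν α = zVec (D.phase ν + α) := by
  unfold localState
  rw [h]
  funext f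
  simp [zVec, Complex.ofReal_add]

lemma localState_X' (D : ZXDiagram Node Wire) (ν : Node) (h : D.typ ν = NodeType.X) (α : ℝ) :
    localState D ν α = xVec (D.phase ν + α) := by
  unfold localState
  rw [h]
  funext f
  simp [xVec, Complex.ofReal_add]

lemma localState_H' (D : ZXDiagram Node Wire) (ν : Node) (h : D.typ ν = NodeType.H) (α : ℝ) :
    localState D ν α = hVec := by
  unfold localState
  rw [h]
  funext f
  simp [hVec]


/-- A Pauli labelling is a Pauli semiweb iff it satisfies the H condition
and the all-or-nothing condition. -/
theorem isPauliSemiweb_iff_conditions {Node Wire : Type} [Fintype Node] [DecidableEq Node]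
    [Fintype Wire] [DecidableEq Wire] (D : ZXDiagram Node Wire) (w : Wire → Pauli) :
    IsPauliSemiwebState D w ↔ HCond D w ∧ AllOrNothing D w := by
  classical
  constructor
  · intro hsem
    constructor
    · -- H condition
      intro ν j₁ j₂ hH hadj1 hadj2 hne
      have hcard : (Finset.univ : Finset {j : Wire // D.adj ν j = true}).card = 2 := by
        rw [Finset.card_univ, Fintype.card_subtype]
        exact D.h_deg_two ν hH
      obtain ⟨a, b, hab, huniv⟩ := Finset.card_eq_two.mp hcard
      have hsem' := hsem ν
      simp only [localState_H' D ν hH] at hsem'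
      obtain ⟨lam, α, hE⟩ := hsem'
      have hpair := (hIff (fun j : {j : Wire // D.adj ν j = true} => w j.1) a b hab huniv).mp
        ⟨lam, hE⟩
      have key : ∀ u v : {j : Wire // D.adj ν j = true}, u ≠ v →
          ((w u.1).hasX = (w v.1).hasZ ∧ (w u.1).hasZ = (w v.1).hasX) := by
        intro u v huv
        have hu : u ∈ (Finset.univ : Finset {j : Wire // D.adj ν j = true}) := Finset.mem_univ u
        have hv : v ∈ (Finset.univ : Finset {j : Wire // D.adj ν j = true}) := Finset.mem_univ v
        rw [huniv, Finset.mem_insert, Finset.mem_singleton] at hu hv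
        rcases hu with rfl | rfl <;> rcases hv with rfl | rfl
        · exact absurd rfl huv
        · exact hpair
        · exact ⟨hpair.2.symm, hpair.1.symm⟩
        · exact absurd rfl huv
      have hk := key ⟨j₁, hadj1⟩ ⟨j₂, hadj2⟩ (fun hc => hne (congrArg Subtype.val hc))
      constructor
      · rw [hk.1]
      · rw [hk.2]
    · -- all-or-nothing
      intro ν hspider
      have hsem' := hsem ν
      cases htyp : D.typ ν with
      | H => exact absurd htyp hspider
      | Z =>
        simp only [localState_Z' D ν htyp, add_zero] at hsem'
        rcases (zIff (fun j : {j : Wire // D.adj ν j = true} => w j.1) (D.phase ν)).mp hsem'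
          with hall | hnone
        · left; intro j hj; have := hall ⟨j, hj⟩; simpa [oppSupp] using this
        · right; intro j hj; have := hnone ⟨j, hj⟩; simpa [oppSupp] using this
      | X =>
        simp only [localState_X' D ν htyp, add_zero] at hsem'
        rcases (xIff (fun j : {j : Wire // D.adj ν j = true} => w j.1) (D.phase ν)).mp hsem'
          with hall | hnone
        · left; intro j hj; have := hall ⟨j, hj⟩; simpa [oppSupp] using this
        · right; intro j hj; have := hnone ⟨j, hj⟩; simpa [oppSupp] using this
  · rintro ⟨hHc, hAoN⟩ ν
    cases htyp : D.typ ν with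
    | Z =>
      simp only [localState_Z' D ν htyp, add_zero]
      apply (zIff (fun j : {j : Wire // D.adj ν j = true} => w j.1) (D.phase ν)).mpr
      rcases hAoN ν (by rw [ZXDiagram.IsSpiderNode, htyp]; simp) with hall | hnone
      · left; intro j; have := hall j.1 j.2; rwa [htyp] at this
      · right; intro j; have := hnone j.1 j.2; rwa [htyp] at this
    | X =>
      simp only [localState_X' D ν htyp, add_zero]
      apply (xIff (fun j : {j : Wire // D.adj ν j = true} => w j.1) (D.phase ν)).mpr
      rcases hAoN ν (by rw [ZXDiagram.IsSpiderNode, htyp]; simp) with hall | hnone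
      · left; intro j; have := hall j.1 j.2; rwa [htyp] at this
      · right; intro j; have := hnone j.1 j.2; rwa [htyp] at this
    | H =>
      simp only [localState_H' D ν htyp]
      have hcard : (Finset.univ : Finset {j : Wire // D.adj ν j = true}).card = 2 := by
        rw [Finset.card_univ, Fintype.card_subtype]
        exact D.h_deg_two ν htyp
      obtain ⟨a, b, hab, huniv⟩ := Finset.card_eq_two.mp hcard
      have hab' : a.1 ≠ b.1 := fun hc => hab (Subtype.ext hc)
      have hc := hHc ν a.1 b.1 htyp a.2 b.2 hab'
      have hx : (w a.1).hasX = (w b.1).hasZ := Bool.eq_iff_iff.mpr hc.1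
      have hz : (w a.1).hasZ = (w b.1).hasX := Bool.eq_iff_iff.mpr hc.2
      obtain ⟨lam, hE⟩ :=
        (hIff (fun j : {j : Wire // D.adj ν j = true} => w j.1) a b hab huniv).mpr ⟨hx, hz⟩
      exact ⟨lam, 0, hE⟩
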